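/- arXiv:2004.00850 — 7 statements merged into one kernel-verified Lean document; each statement's English description precedes it below -/
import Mathlib

section
/- Let M be a symmetric r×r matrix with entries in the ring of real multivariate polynomials in n variables. If the scalar polynomial yᵀ M(x) y in n + r variables (x₁,…,xₙ, y₁,…,y_r) is a sum of squares of real polynomials in n + r variables, then M is an SOS matrix polynomial: there exist matrix polynomials M₁, …, M_k of size r with M = Σᵢ Mᵢᵀ Mᵢ. -/
/-!
View `yᵀ M(x) y = ∑ⱼ pⱼ²` as an identity of polynomials in `y` over the formally real ring
`R = ℝ[x]`. Its constant term gives `∑ⱼ pⱼ(0)² = 0`, so every `pⱼ` vanishes at `y = 0`.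
Applying `∂_a ∂_b` and setting `y = 0` then leaves `M a b + M b a = 2 ∑ⱼ ℓⱼ a * ℓⱼ b`, where
`ℓⱼ b = ∂_b pⱼ (0)` is the linear part of `pⱼ`; by symmetry `M = ∑ⱼ ℓⱼ ℓⱼᵀ`, and each rank-one
term `ℓ ℓᵀ` is `AᵀA` for the matrix `A` whose only nonzero row is `ℓᵀ`.
-/

open Matrix MvPolynomial

theorem IsFormallyReal.eq_zero_of_sum_sq_eq_zero {R ι : Type*} [CommRing R] [IsFormallyReal R]
    {s : Finset ι} {f : ι → R} (h : ∑ j ∈ s, f j ^ 2 = 0) {i : ι} (hi : i ∈ s) : f i = 0 := by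
  classical
  rw [← Finset.add_sum_erase s _ hi] at h
  exact pow_eq_zero_iff two_ne_zero |>.mp <|
    eq_zero_of_add_right (IsSquare.sq (f i)).isSumSq (.sum_sq _ _) h

theorem Matrix.exists_transpose_mul_self_eq_vecMulVec {m R : Type*} [Fintype m] [CommSemiring R]
    (v : m → R) : ∃ A : Matrix m m R, Aᵀ * A = vecMulVec v v := by
  cases isEmpty_or_nonempty m with
  | inl _ => exact ⟨0, Subsingleton.elim _ _⟩
  | inr h =>
    classical
    obtain ⟨i⟩ := h
    refine ⟨vecMulVec (Pi.single i 1) v, ?_⟩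
    rw [transpose_vecMulVec, vecMulVec_mul_vecMulVec]
    simp

namespace MvPolynomial

variable {σ R : Type*}

section OrderedRing

variable [CommRing R] [LinearOrder R] [IsStrictOrderedRing R]

theorem eval_nonneg_of_isSumSq {p : MvPolynomial σ R}
    (hp : IsSumSq p) (x : σ → R) : 0 ≤ eval x p := by
  induction hp with
  | zero => simp
  | sq_add a _ ih => simpa using add_nonneg (mul_self_nonneg (eval x a)) ih

instance : IsFormallyReal (MvPolynomial σ R) :=
  .of_eq_zero_of_eq_zero_of_mul_self_add fun {s a} hs h => funext fun x => by
    have hx : eval x a * eval x a + eval x s = 0 := by simpa using congrArg (eval x) h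
    have ha : eval x a * eval x a = 0 :=
      le_antisymm (by linarith [eval_nonneg_of_isSumSq hs x]) (mul_self_nonneg _)
    simpa using mul_self_eq_zero.mp ha

end OrderedRing

section CommSemiring

variable [CommSemiring R]

theorem constantCoeff_pderiv_pderiv_sq {p : MvPolynomial σ R} (hp : constantCoeff p = 0)
    (a b : σ) :
    constantCoeff (pderiv a (pderiv b (p ^ 2))) =
      2 * (constantCoeff (pderiv a p) * constantCoeff (pderiv b p)) := by
  simp only [sq, Derivation.leibniz, smul_eq_mul, map_add, map_mul, hp, zero_mul]
  ring

theorem sumAlgEquiv_rename_swap_X_inr {τ : Type*} (a : τ) :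
    sumAlgEquiv R τ σ (rename Sum.swap (X (Sum.inr a) : MvPolynomial (σ ⊕ τ) R)) = X a := by
  simp

theorem sumAlgEquiv_rename_swap_rename_inl {τ : Type*} (m : MvPolynomial σ R) :
    sumAlgEquiv R τ σ (rename Sum.swap (rename Sum.inl m : MvPolynomial (σ ⊕ τ) R)) = C m := by
  rw [rename_rename]
  exact congrArg (· m) (congrArg DFunLike.coe (sumAlgEquiv_comp_rename_inr R τ σ))

variable [Fintype σ]

noncomputable def quadraticForm (M : Matrix σ σ R) : MvPolynomial σ R :=
  ∑ a, ∑ b, X a * C (M a b) * X b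

theorem constantCoeff_quadraticForm (M : Matrix σ σ R) : constantCoeff (quadraticForm M) = 0 := by
  simp [quadraticForm]

theorem pderiv_pderiv_quadraticForm [DecidableEq σ] (M : Matrix σ σ R) (a b : σ) :
    pderiv a (pderiv b (quadraticForm M)) = C (M a b + M b a) := by
  simp [quadraticForm, pderiv_X, Pi.single_apply, Finset.sum_add_distrib]

theorem sumAlgEquiv_rename_swap_quadraticForm {τ : Type*} (M : Matrix σ σ (MvPolynomial τ R)) :
    sumAlgEquiv R σ τ (rename Sum.swap
      (∑ a, ∑ b, X (Sum.inr a) * rename Sum.inl (M a b) * X (Sum.inr b))) = quadraticForm M := by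
  simp only [map_sum, map_mul, sumAlgEquiv_rename_swap_X_inr, sumAlgEquiv_rename_swap_rename_inl,
    quadraticForm]

end CommSemiring

variable [CommRing R] [IsDomain R] [CharZero R] [IsFormallyReal R] [Fintype σ]
  {M : Matrix σ σ R} {ι : Type*} [Fintype ι] {p : ι → MvPolynomial σ R}

theorem eq_sum_vecMulVec_of_quadraticForm_eq_sum_sq (hM : Mᵀ = M)
    (h : quadraticForm M = ∑ j, p j ^ 2) :
    M = ∑ j, vecMulVec (fun b => constantCoeff (pderiv b (p j)))
      (fun b => constantCoeff (pderiv b (p j))) := by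
  classical
  have hp0 (j : ι) : constantCoeff (p j) = 0 := by
    refine IsFormallyReal.eq_zero_of_sum_sq_eq_zero (f := fun j => constantCoeff (p j)) ?_
      (Finset.mem_univ j)
    simpa [constantCoeff_quadraticForm] using (congrArg constantCoeff h).symm
  ext a b
  have hab := congrArg (fun q => constantCoeff (pderiv a (pderiv b q))) h
  simp only [pderiv_pderiv_quadraticForm, constantCoeff_C, map_sum,
    constantCoeff_pderiv_pderiv_sq (hp0 _), ← Finset.mul_sum] at hab
  rw [← transpose_apply M a b, hM, ← two_mul] at hab
  simpa [Matrix.sum_apply, vecMulVec_apply] using mul_left_cancel₀ two_ne_zero hab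

theorem exists_sum_transpose_mul_self_of_quadraticForm_eq_sum_sq (hM : Mᵀ = M)
    (h : quadraticForm M = ∑ j, p j ^ 2) :
    ∃ Ms : ι → Matrix σ σ R, M = ∑ j, (Ms j)ᵀ * Ms j := by
  choose Ms hMs using fun j => exists_transpose_mul_self_eq_vecMulVec
    (fun b => constantCoeff (pderiv b (p j)))
  exact ⟨Ms, by simpa only [hMs] using eq_sum_vecMulVec_of_quadraticForm_eq_sum_sq hM h⟩

end MvPolynomial

/-- If `M` is a symmetric `r × r` matrix of real multivariate
polynomials in `n` variables and the scalar polynomial `yᵀ M(x) y` in the `n + r`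
variables `Fin n ⊕ Fin r` is a sum of squares of polynomials, then `M` is an SOS
matrix polynomial: `M = ∑ i, (Mᵢ)ᵀ * Mᵢ` for some matrix polynomials `Mᵢ`. -/
theorem quadratic_form_sos_implies_sos_matrix_polynomial
    (n r : ℕ)
    (M : Matrix (Fin r) (Fin r) (MvPolynomial (Fin n) ℝ))
    (hsymm : Mᵀ = M)
    (hsos : ∃ (s : ℕ) (p : Fin s → MvPolynomial (Fin n ⊕ Fin r) ℝ),
      (∑ a : Fin r, ∑ b : Fin r,
          MvPolynomial.X (Sum.inr a) *
            MvPolynomial.rename Sum.inl (M a b) * MvPolynomial.X (Sum.inr b))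
        = ∑ j, (p j) ^ 2) :
    ∃ (k : ℕ) (Ms : Fin k → Matrix (Fin r) (Fin r) (MvPolynomial (Fin n) ℝ)),
      M = ∑ i, (Ms i)ᵀ * Ms i := by
  obtain ⟨s, p, hp⟩ := hsos
  have hq : quadraticForm M =
      ∑ j, sumAlgEquiv ℝ (Fin r) (Fin n) (rename Sum.swap (p j)) ^ 2 := by
    rw [← sumAlgEquiv_rename_swap_quadraticForm, hp]
    simp only [map_sum, map_pow]
  exact ⟨s, exists_sum_transpose_mul_self_of_quadraticForm_eq_sum_sq hsymm hq⟩
end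

section
/- Let A be an n×n real matrix, B an n×m real matrix, U₀ an m×T real matrix, and X₀, X₁ n×T real matrices satisfying X₁ = A · X₀ + B · U₀. Suppose G is a T×n real matrix with X₀ · G = Iₙ, and set K := U₀ · G. Then A + B · K = X₁ · G. -/
open Matrix

/-- If the data matrices satisfy `X₁ = A * X₀ + B * U₀`, `G` satisfies
`X₀ * G = I`, and `K := U₀ * G`, then `A + B * K = X₁ * G`. -/
theorem data_based_closed_loop_matrix_identity
    (n m T : ℕ)
    (A : Matrix (Fin n) (Fin n) ℝ) (B : Matrix (Fin n) (Fin m) ℝ)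
    (U₀ : Matrix (Fin m) (Fin T) ℝ)
    (X₀ X₁ : Matrix (Fin n) (Fin T) ℝ)
    (hdata : X₁ = A * X₀ + B * U₀)
    (G : Matrix (Fin T) (Fin n) ℝ)
    (hG : X₀ * G = 1)
    (K : Matrix (Fin m) (Fin n) ℝ)
    (hK : K = U₀ * G) :
    A + B * K = X₁ * G := by
  calc A + B * K = A * (X₀ * G) + B * (U₀ * G) := by rw [hG, Matrix.mul_one, hK]
    _ = (A * X₀ + B * U₀) * G := by rw [Matrix.add_mul, Matrix.mul_assoc, Matrix.mul_assoc]
    _ = X₁ * G := by rw [hdata]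
end

section
/- Let A be an n×n real matrix, B an n×m real matrix, U₀ an m×T real matrix, and X₀, X₁ n×T real matrices satisfying X₁ = A · X₀ + B · U₀. Suppose G is a T×n real matrix with X₀ · G = Iₙ and set K := U₀ · G. Then every sequence x : ℕ → ℝⁿ satisfying the closed-loop recursion x(k+1) = A x(k) + B (K x(k)) for all k also satisfies the data-based representation x(k+1) = X₁ · G · x(k) for all k. -/
open Matrix

theorem Matrix.mul_eq_add_mul_mul_of_mul_eq_one {l m t R : Type*} [Fintype l] [Fintype m] [Fintype t]
    [DecidableEq l] [Semiring R]
    {A : Matrix l l R} {B : Matrix l m R} {U₀ : Matrix m t R} {X₀ X₁ : Matrix l t R}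
    {G : Matrix t l R} (hdata : X₁ = A * X₀ + B * U₀) (hG : X₀ * G = 1) :
    X₁ * G = A + B * (U₀ * G) := by
  rw [hdata, Matrix.add_mul, Matrix.mul_assoc, hG, Matrix.mul_one, Matrix.mul_assoc]

/-- Data-based representation of the closed-loop system: if
`X₁ = A * X₀ + B * U₀`, `X₀ * G = I` and `K := U₀ * G`, then every sequence
satisfying the closed-loop recursion `x(k+1) = A x(k) + B (K x(k))` also satisfies
`x(k+1) = X₁ G x(k)`. -/
theorem data_based_closed_loop_representation
    (n m T : ℕ)
    (A : Matrix (Fin n) (Fin n) ℝ) (B : Matrix (Fin n) (Fin m) ℝ)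
    (U₀ : Matrix (Fin m) (Fin T) ℝ)
    (X₀ X₁ : Matrix (Fin n) (Fin T) ℝ)
    (hdata : X₁ = A * X₀ + B * U₀)
    (G : Matrix (Fin T) (Fin n) ℝ)
    (hG : X₀ * G = 1)
    (K : Matrix (Fin m) (Fin n) ℝ)
    (hK : K = U₀ * G)
    (x : ℕ → Fin n → ℝ)
    (hx : ∀ k, x (k + 1) = A.mulVec (x k) + B.mulVec (K.mulVec (x k))) :
    ∀ k, x (k + 1) = (X₁ * G).mulVec (x k) := by
  intro k
  rw [hx k, mul_eq_add_mul_mul_of_mul_eq_one hdata hG, ← hK, add_mulVec, mulVec_mulVec]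
end

section
/- Let A be an n×N real matrix, B an n×m real matrix, U₀ an m×T real matrix, Z₀ an N×T real matrix, and X₁ := A · Z₀ + B · U₀. Let G be a T×N matrix with entries in the ring of real multivariate polynomials in n variables such that Z₀ · G = I_N (as matrices of polynomials, with the real constants embedded as constant polynomials), and set F := U₀ · G. Then, as N-vectors of polynomials, (A + B · F) · Z = X₁ · G · Z for every N-vector Z of polynomials in the n variables; in particular, for every x ∈ ℝⁿ and every v ∈ ℝᴺ, (A + B · F(x)) v = X₁ · G(x) · v, where F(x) and G(x) denote entrywise evaluation at x. -/
open Matrix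

/-! Substituting `X₁ = A Z₀ + B U₀` gives `X₁ G = A (Z₀ G) + B (U₀ G) = A + B F`, using only the
right-inverse property `Z₀ G = I`. Evaluating at `x` fixes the real constants, so `G(x)` is still a
right inverse of `Z₀` and the same identity holds over `ℝ`. -/

theorem Matrix.add_mul_mul_eq_of_mul_eq_one {l n m t α : Type*} [Fintype n] [Fintype m]
    [Fintype t] [DecidableEq n] [Semiring α]
    (A : Matrix l n α) (B : Matrix l m α) (Z₀ : Matrix n t α) (U₀ : Matrix m t α)
    (G : Matrix t n α) (hG : Z₀ * G = 1) :
    A + B * (U₀ * G) = (A * Z₀ + B * U₀) * G := by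
  rw [Matrix.add_mul, Matrix.mul_assoc, hG, Matrix.mul_one, Matrix.mul_assoc]

theorem Matrix.map_mul_of_leftInverse {l t n R S : Type*} [Fintype t] [NonAssocSemiring R]
    [NonAssocSemiring S] {f : R →+* S} {g : S →+* R} (hgf : Function.LeftInverse g f)
    (M : Matrix l t R) (G : Matrix t n S) :
    (M.map f * G).map g = M * G.map g := by
  rw [Matrix.map_mul, Matrix.map_map, hgf.comp_eq_id, Matrix.map_id]

/-- Data-dependent representation of the closed-loop polynomial
system.  With data satisfying `X₁ = A Z₀ + B U₀`, a polynomial matrix `G` with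
`Z₀ G = I_N` (real constants embedded as constant polynomials) and
`F := U₀ G`, we have `(A + B F) Z = X₁ G Z` for every `N`-vector `Z` of
polynomials, and in particular `(A + B F(x)) v = X₁ G(x) v` for every `x ∈ ℝⁿ`
and `v ∈ ℝᴺ`, where `F(x)`, `G(x)` denote entrywise evaluation at `x`. -/
theorem data_dependent_representation_polynomial_system
    (n N m T : ℕ)
    (A : Matrix (Fin n) (Fin N) ℝ) (B : Matrix (Fin n) (Fin m) ℝ)
    (U₀ : Matrix (Fin m) (Fin T) ℝ) (Z₀ : Matrix (Fin N) (Fin T) ℝ)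
    (X₁ : Matrix (Fin n) (Fin T) ℝ)
    (hX₁ : X₁ = A * Z₀ + B * U₀)
    (G : Matrix (Fin T) (Fin N) (MvPolynomial (Fin n) ℝ))
    (hG : Z₀.map (MvPolynomial.C : ℝ → MvPolynomial (Fin n) ℝ) * G = 1)
    (F : Matrix (Fin m) (Fin N) (MvPolynomial (Fin n) ℝ))
    (hF : F = U₀.map (MvPolynomial.C : ℝ → MvPolynomial (Fin n) ℝ) * G) :
    (∀ Z : Fin N → MvPolynomial (Fin n) ℝ,
      (A.map (MvPolynomial.C : ℝ → MvPolynomial (Fin n) ℝ) + B.map (MvPolynomial.C : ℝ → MvPolynomial (Fin n) ℝ) * F).mulVec Z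
        = (X₁.map (MvPolynomial.C : ℝ → MvPolynomial (Fin n) ℝ) * G).mulVec Z) ∧
    (∀ (x : Fin n → ℝ) (v : Fin N → ℝ),
      (A + B * F.map (MvPolynomial.eval x)).mulVec v
        = (X₁ * G.map (MvPolynomial.eval x)).mulVec v) := by
  subst hX₁ hF
  refine ⟨fun Z => ?_, fun x v => ?_⟩
  · rw [Matrix.add_mul_mul_eq_of_mul_eq_one _ _ _ _ G hG,
      Matrix.map_add _ (map_add MvPolynomial.C), Matrix.map_mul, Matrix.map_mul]
  · have hCx : Function.LeftInverse (MvPolynomial.eval x) MvPolynomial.C :=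
      MvPolynomial.eval_C
    have hGx : Z₀ * G.map (MvPolynomial.eval x) = 1 := by
      rw [← Matrix.map_mul_of_leftInverse hCx, hG, Matrix.map_one _ (map_zero _) (map_one _)]
    rw [Matrix.map_mul_of_leftInverse hCx, Matrix.add_mul_mul_eq_of_mul_eq_one _ _ _ _ _ hGx]
end

section
/- Let A be an n×N real matrix, B an n×m real matrix, U₀ an m×T real matrix, Z₀ an N×T real matrix, and X₁ := A · Z₀ + B · U₀. Let Z : ℝⁿ → ℝᴺ be differentiable with Jacobian J(ξ) at ξ, let P be a symmetric positive definite N×N real matrix, let Y : ℝⁿ → ℝ^{T×N} satisfy Z₀ · Y(ξ) = P for all ξ, and let ε : ℝⁿ → ℝ with ε(ξ) ≥ 0 for all ξ. Assume that for every ξ ∈ ℝⁿ the matrix −[J(ξ) · X₁ · Y(ξ) + (J(ξ) · X₁ · Y(ξ))ᵀ] − ε(ξ) · I_N is positive semidefinite. Let x : ℝ → ℝⁿ be differentiable and satisfy the closed-loop equation x'(t) = (A + B · F(x(t))) Z(x(t)) for all t, where F(ξ) := U₀ · Y(ξ) · P⁻¹. Then the function t ↦ Z(x(t))ᵀ P⁻¹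 Z(x(t)) is nonincreasing (antitone) on ℝ. -/
/-!
Along a closed-loop trajectory, `z = Z(x)` satisfies `ż = J(x) (A + B F(x)) z`, and the data
identity `Z₀ Y = P` turns the closed-loop matrix into `X₁ Y P⁻¹`. With `v = P⁻¹ z` the derivative
of `V = zᵀ P⁻¹ z` is therefore `2 vᵀ (J X₁ Y) v = vᵀ (J X₁ Y + (J X₁ Y)ᵀ) v`, which is
`≤ -ε |v|² ≤ 0`.
-/

open Matrix

section Calculus

variable {𝕜 ι κ : Type*} [NontriviallyNormedField 𝕜] [Fintype ι] {f g : 𝕜 → ι → 𝕜}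
  {f' g' : ι → 𝕜} {t : 𝕜}

theorem HasDerivAt.dotProduct (hf : HasDerivAt f f' t) (hg : HasDerivAt g g' t) :
    HasDerivAt (fun s => f s ⬝ᵥ g s) (f' ⬝ᵥ g t + f t ⬝ᵥ g') t := by
  simp only [_root_.dotProduct, ← Finset.sum_add_distrib]
  exact HasDerivAt.fun_sum fun i _ => (hasDerivAt_pi.mp hf i).mul (hasDerivAt_pi.mp hg i)

theorem HasDerivAt.const_mulVec (S : Matrix κ ι 𝕜) (hf : HasDerivAt f f' t) :
    HasDerivAt (fun s => S *ᵥ f s) (S *ᵥ f') t := by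
  refine hasDerivAt_pi.mpr fun k => ?_
  simp only [mulVec, _root_.dotProduct]
  exact HasDerivAt.fun_sum fun i _ => (hasDerivAt_pi.mp hf i).const_mul _

theorem HasDerivAt.dotProduct_mulVec_self {S : Matrix ι ι 𝕜} (hS : Sᵀ = S)
    (hf : HasDerivAt f f' t) :
    HasDerivAt (fun s => f s ⬝ᵥ S *ᵥ f s) (2 * (S *ᵥ f t ⬝ᵥ f')) t := by
  convert hf.dotProduct (hf.const_mulVec S) using 1
  rw [dotProduct_comm f', dotProduct_mulVec (f t), ← vecMul_transpose, hS]
  ring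

end Calculus

section Semidefinite

variable {ι : Type*}

theorem Matrix.PosSemidef.of_sub_smul_one [DecidableEq ι] {Q : Matrix ι ι ℝ} {ε : ℝ}
    (h : (Q - ε • 1).PosSemidef) (hε : 0 ≤ ε) : Q.PosSemidef := by
  simpa using h.add (PosSemidef.one.smul hε)

theorem dotProduct_mulVec_nonpos_of_posSemidef_neg_add_transpose [Fintype ι] {M : Matrix ι ι ℝ}
    (h : (-(M + Mᵀ)).PosSemidef) (v : ι → ℝ) : v ⬝ᵥ M *ᵥ v ≤ 0 := by
  have hv := h.dotProduct_mulVec_nonneg v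
  rw [star_trivial, neg_mulVec, add_mulVec, dotProduct_neg, dotProduct_add,
    mulVec_transpose, dotProduct_comm v (v ᵥ* M), ← dotProduct_mulVec] at hv
  linarith

end Semidefinite

theorem data_mul_mul_inv_eq_closedLoop {R l n k t : Type*} [CommRing R] [Fintype n]
    [DecidableEq n] [Fintype k] [Fintype t] (A : Matrix l n R) (B : Matrix l k R)
    (U₀ : Matrix k t R) {Z₀ : Matrix n t R} {Y : Matrix t n R} {P : Matrix n n R}
    (hY : Z₀ * Y = P) (hP : IsUnit P.det) :
    (A * Z₀ + B * U₀) * Y * P⁻¹ = A + B * (U₀ * Y * P⁻¹) := by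
  rw [Matrix.add_mul, Matrix.add_mul, Matrix.mul_assoc A, hY, Matrix.mul_assoc A,
    mul_nonsing_inv P hP, Matrix.mul_one, Matrix.mul_assoc B, Matrix.mul_assoc B,
    Matrix.mul_assoc U₀]

/-- Data-driven stabilization (stability part).  With experiment
data satisfying `X₁ = A Z₀ + B U₀`, a differentiable `Z : ℝⁿ → ℝᴺ` with Jacobian
matrix `J(ξ)`, a symmetric positive definite `P` with `Z₀ Y(ξ) = P` for all `ξ`,
a nonnegative `ε`, and
`−[J(ξ) X₁ Y(ξ) + (J(ξ) X₁ Y(ξ))ᵀ] − ε(ξ) I_N ⪰ 0` for all `ξ`, every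
differentiable trajectory of the closed loop
`x' = (A + B F(x)) Z(x)`, `F(ξ) := U₀ Y(ξ) P⁻¹`, makes the Lyapunov function
`t ↦ Z(x t)ᵀ P⁻¹ Z(x t)` nonincreasing. -/
theorem data_driven_stabilization_lyapunov_nonincreasing
    (n N m T : ℕ)
    (A : Matrix (Fin n) (Fin N) ℝ) (B : Matrix (Fin n) (Fin m) ℝ)
    (U₀ : Matrix (Fin m) (Fin T) ℝ) (Z₀ : Matrix (Fin N) (Fin T) ℝ)
    (X₁ : Matrix (Fin n) (Fin T) ℝ)
    (hX₁ : X₁ = A * Z₀ + B * U₀)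
    (Z : (Fin n → ℝ) → (Fin N → ℝ))
    (hZ : Differentiable ℝ Z)
    (J : (Fin n → ℝ) → Matrix (Fin N) (Fin n) ℝ)
    (hJ : ∀ ξ, J ξ = LinearMap.toMatrix' (fderiv ℝ Z ξ).toLinearMap)
    (P : Matrix (Fin N) (Fin N) ℝ)
    (hP : P.PosDef)
    (Y : (Fin n → ℝ) → Matrix (Fin T) (Fin N) ℝ)
    (hY : ∀ ξ, Z₀ * Y ξ = P)
    (ε : (Fin n → ℝ) → ℝ)
    (hε : ∀ ξ, 0 ≤ ε ξ)
    (hQ : ∀ ξ, (-(J ξ * X₁ * Y ξ + (J ξ * X₁ * Y ξ)ᵀ)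
        - ε ξ • (1 : Matrix (Fin N) (Fin N) ℝ)).PosSemidef)
    (F : (Fin n → ℝ) → Matrix (Fin m) (Fin N) ℝ)
    (hF : ∀ ξ, F ξ = U₀ * Y ξ * P⁻¹)
    (x : ℝ → (Fin n → ℝ))
    (hx : Differentiable ℝ x)
    (hode : ∀ t, deriv x t = (A + B * F (x t)).mulVec (Z (x t))) :
    Antitone (fun t => Z (x t) ⬝ᵥ P⁻¹.mulVec (Z (x t))) := by
  have hPinv_symm : P⁻¹ᵀ = P⁻¹ := by
    rw [transpose_nonsing_inv, show Pᵀ = P from hP.isHermitian.eq]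
  have hZx : ∀ t, HasDerivAt (fun s => Z (x s))
      ((J (x t) * X₁ * Y (x t)) *ᵥ (P⁻¹ *ᵥ Z (x t))) t := by
    intro t
    refine ((hZ (x t)).hasFDerivAt.comp_hasDerivAt t (hx t).hasDerivAt).congr_deriv ?_
    rw [hode, hF, ← data_mul_mul_inv_eq_closedLoop A B U₀ (hY _) hP.det_pos.ne'.isUnit,
      ← hX₁, hJ]
    simp only [← mulVec_mulVec, LinearMap.toMatrix'_mulVec, ContinuousLinearMap.coe_coe]
  refine antitone_of_hasDerivAt_nonpos (fun t => (hZx t).dotProduct_mulVec_self hPinv_symm)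
    fun t => mul_nonpos_of_nonneg_of_nonpos zero_le_two ?_
  exact dotProduct_mulVec_nonpos_of_posSemidef_neg_add_transpose
    ((hQ (x t)).of_sub_smul_one (hε (x t))) (P⁻¹ *ᵥ Z (x t))
end

section
/- Let Z : ℝⁿ → ℝᴺ be differentiable with Jacobian J(ξ) at ξ, let A : ℝⁿ → ℝ^{n×N} and B : ℝⁿ → ℝ^{n×m} be matrix-valued functions, let P be a symmetric positive definite N×N real matrix, let Y : ℝⁿ → ℝ^{m×N}, and let ε : ℝⁿ → ℝ be nonnegative. Assume that for every ξ ∈ ℝⁿ the matrix −[J(ξ)(A(ξ) P + B(ξ) Y(ξ)) + (A(ξ) P + B(ξ) Y(ξ))ᵀ J(ξ)ᵀ] − ε(ξ) I_N is positive semidefinite. Let x : ℝ → ℝⁿ be differentiable and satisfy x'(t) = A(x(t)) Z(x(t)) + B(x(t)) (Y(x(t)) P⁻¹ Z(x(t))) for all t. Then the function t ↦ Z(x(t))ᵀ P⁻¹ Z(x(t)) is nonincreasing on ℝ, and its derivative at each t is at most −ε(x(t)) · ‖P⁻¹ Z(x(t))‖². -/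
/-!
With `w = P⁻¹ Z(x)` the closed loop reads `ẋ = (A P + B Y) w`, and `P⁻¹` is symmetric, so by the
chain rule the Lyapunov function `V = Z(x)ᵀ P⁻¹ Z(x)` has derivative
`2 wᵀ J (A P + B Y) w = wᵀ [J (A P + B Y) + (A P + B Y)ᵀ Jᵀ] w`.
The semidefiniteness hypothesis, tested on `w`, bounds this by `-ε ‖w‖² ≤ 0`.
-/

open Matrix

section Calculus

variable {𝕜 ι κ : Type*} [NontriviallyNormedField 𝕜] [Fintype ι]
  {f g : 𝕜 → ι → 𝕜} {f' g' : ι → 𝕜} {t : 𝕜}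

theorem HasDerivAt.mulVec (M : Matrix κ ι 𝕜) (hg : HasDerivAt g g' t) :
    HasDerivAt (fun s => M *ᵥ g s) (M *ᵥ g') t :=
  hasDerivAt_pi.mpr fun i => by
    have hrow := (hasDerivAt_const t (M i)).dotProduct hg
    rwa [zero_dotProduct, zero_add] at hrow

theorem HasDerivAt.dotProduct_mulVec_self_of_isSymm {S : Matrix ι ι 𝕜} (hS : S.IsSymm)
    (hg : HasDerivAt g g' t) :
    HasDerivAt (fun s => g s ⬝ᵥ S *ᵥ g s) (2 * (S *ᵥ g t ⬝ᵥ g')) t := by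
  have hswap : g t ⬝ᵥ S *ᵥ g' = g' ⬝ᵥ S *ᵥ g t := by
    rw [← dotProduct_transpose_mulVec, hS.eq]
  convert hg.dotProduct (hg.mulVec S) using 1
  rw [hswap, dotProduct_comm]
  ring

theorem HasFDerivAt.comp_hasDerivAt_toMatrix' [Fintype κ] [DecidableEq ι]
    {Z : (ι → 𝕜) → κ → 𝕜} {Z' : (ι → 𝕜) →L[𝕜] κ → 𝕜} {x : 𝕜 → ι → 𝕜} {x' : ι → 𝕜}
    (hZ : HasFDerivAt Z Z' (x t)) (hx : HasDerivAt x x' t) :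
    HasDerivAt (fun s => Z (x s)) (LinearMap.toMatrix' Z'.toLinearMap *ᵥ x') t := by
  rw [LinearMap.toMatrix'_mulVec]
  exact hZ.comp_hasDerivAt t hx

end Calculus

theorem two_mul_dotProduct_mulVec_le_of_posSemidef {ι : Type*} [Fintype ι] [DecidableEq ι]
    {C : Matrix ι ι ℝ} {c : ℝ} (h : (-(C + Cᵀ) - c • (1 : Matrix ι ι ℝ)).PosSemidef)
    (w : ι → ℝ) : 2 * (w ⬝ᵥ C *ᵥ w) ≤ -c * (w ⬝ᵥ w) := by
  have hw := h.dotProduct_mulVec_nonneg w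
  simp only [sub_mulVec, neg_mulVec, add_mulVec, smul_mulVec, one_mulVec, dotProduct_sub,
    dotProduct_neg, dotProduct_add, dotProduct_smul, smul_eq_mul, star_trivial,
    dotProduct_transpose_mulVec] at hw
  linarith

theorem EuclideanSpace.norm_toLp_sq {ι : Type*} [Fintype ι] (w : ι → ℝ) :
    ‖(WithLp.equiv 2 (ι → ℝ)).symm w‖ ^ 2 = w ⬝ᵥ w := by
  rw [EuclideanSpace.real_norm_sq_eq]
  simp [dotProduct, sq]

/-- Model-based SOS stabilization (Proposition 2).  For the
polynomial system `ẋ = A(x) Z(x) + B(x) u` with controller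
`u = Y(x) P⁻¹ Z(x)`, if
`−[J(ξ)(A(ξ)P + B(ξ)Y(ξ)) + (A(ξ)P + B(ξ)Y(ξ))ᵀ J(ξ)ᵀ] − ε(ξ) I_N ⪰ 0` for all
`ξ` (with `ε ≥ 0`, `P` symmetric positive definite, `J` the Jacobian of `Z`),
then along every differentiable closed-loop trajectory the Lyapunov function
`t ↦ Z(x t)ᵀ P⁻¹ Z(x t)` is nonincreasing, with derivative at each `t` at most
`−ε(x t) ‖P⁻¹ Z(x t)‖²`. -/
theorem model_based_sos_stabilization
    (n N m : ℕ)
    (Z : (Fin n → ℝ) → (Fin N → ℝ))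
    (hZ : Differentiable ℝ Z)
    (J : (Fin n → ℝ) → Matrix (Fin N) (Fin n) ℝ)
    (hJ : ∀ ξ, J ξ = LinearMap.toMatrix' (fderiv ℝ Z ξ).toLinearMap)
    (A : (Fin n → ℝ) → Matrix (Fin n) (Fin N) ℝ)
    (B : (Fin n → ℝ) → Matrix (Fin n) (Fin m) ℝ)
    (P : Matrix (Fin N) (Fin N) ℝ)
    (hP : P.PosDef)
    (Y : (Fin n → ℝ) → Matrix (Fin m) (Fin N) ℝ)
    (ε : (Fin n → ℝ) → ℝ)
    (hε : ∀ ξ, 0 ≤ ε ξ)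
    (hQ : ∀ ξ, (-(J ξ * (A ξ * P + B ξ * Y ξ) + (A ξ * P + B ξ * Y ξ)ᵀ * (J ξ)ᵀ)
        - ε ξ • (1 : Matrix (Fin N) (Fin N) ℝ)).PosSemidef)
    (x : ℝ → (Fin n → ℝ))
    (hx : Differentiable ℝ x)
    (hode : ∀ t, deriv x t
      = (A (x t)).mulVec (Z (x t))
        + (B (x t)).mulVec ((Y (x t) * P⁻¹).mulVec (Z (x t)))) :
    Antitone (fun t => Z (x t) ⬝ᵥ P⁻¹.mulVec (Z (x t))) ∧
    ∀ t : ℝ, ∃ d : ℝ,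
      HasDerivAt (fun s => Z (x s) ⬝ᵥ P⁻¹.mulVec (Z (x s))) d t ∧
      d ≤ -ε (x t) * ‖(WithLp.equiv 2 (Fin N → ℝ)).symm (P⁻¹.mulVec (Z (x t)))‖ ^ 2 := by
  set w : ℝ → Fin N → ℝ := fun t => P⁻¹ *ᵥ Z (x t)
  set K : ℝ → Matrix (Fin N) (Fin N) ℝ := fun t => J (x t) * (A (x t) * P + B (x t) * Y (x t))
  have hP_mul_inv : P * P⁻¹ = 1 := mul_nonsing_inv P (isUnit_iff_ne_zero.mpr hP.det_pos.ne')
  have hvel : ∀ t, deriv x t = (A (x t) * P + B (x t) * Y (x t)) *ᵥ w t := fun t => by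
    rw [hode, add_mulVec]
    simp only [w, mulVec_mulVec, Matrix.mul_assoc, hP_mul_inv, Matrix.mul_one]
  have hV : ∀ t, HasDerivAt (fun s => Z (x s) ⬝ᵥ P⁻¹ *ᵥ Z (x s)) (2 * (w t ⬝ᵥ K t *ᵥ w t)) t :=
    fun t => by
      have hZx := (hZ (x t)).hasFDerivAt.comp_hasDerivAt_toMatrix' (hx t).hasDerivAt
      rw [← hJ, hvel, mulVec_mulVec] at hZx
      exact hZx.dotProduct_mulVec_self_of_isSymm (isHermitian_iff_isSymm.mp hP.isHermitian).inv
  have hbound : ∀ t, 2 * (w t ⬝ᵥ K t *ᵥ w t)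
      ≤ -ε (x t) * ‖(WithLp.equiv 2 (Fin N → ℝ)).symm (w t)‖ ^ 2 := fun t => by
    rw [EuclideanSpace.norm_toLp_sq]
    exact two_mul_dotProduct_mulVec_le_of_posSemidef (by simpa [K, transpose_mul] using hQ (x t)) _
  refine ⟨antitone_of_hasDerivAt_nonpos hV fun t => (hbound t).trans ?_,
    fun t => ⟨_, hV t, hbound t⟩⟩
  exact mul_nonpos_of_nonpos_of_nonneg (neg_nonpos.mpr (hε _)) (sq_nonneg _)
end

section
/- Let V : ℝⁿ → ℝ be continuous with V(0) = 0 and V(ξ) > 0 for all ξ ≠ 0, and suppose V is radially unbounded: V(ξ) → ∞ as ‖ξ‖ → ∞. Let W : ℝⁿ → ℝ be continuous with W(ξ) > 0 for all ξ ≠ 0. Let x : [0,∞) → ℝⁿ be differentiable such that for every t ≥ 0 the function V ∘ x is differentiable at t with (V ∘ x)'(t) ≤ −W(x(t)). Then x(t) → 0 as t → ∞. -/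
/-!
Since `V ∘ x` is nonincreasing, the trajectory stays in the compact sublevel set
`S = {V ≤ V (x 0)}`. If `V (x t)` stayed above some `δ > 0`, the trajectory would stay in the
compact set `S ∩ {δ ≤ V}`, which avoids the origin, so `W` would be bounded below there by some
`m > 0` and `V (x t) ≤ V (x 0) - m t` would eventually be negative. Hence `V (x t) → 0`; as `V` has
a positive minimum on each compact shell `S ∩ {ε ≤ ‖ξ‖}`, this forces `‖x t‖ < ε` eventually.
-/

open Filter Topology Set

lemma antitoneOn_Ici_of_hasDerivAt_nonpos {f : ℝ → ℝ} {a : ℝ}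
    (hf : ∀ t, a ≤ t → ∃ d, HasDerivAt f d t ∧ d ≤ 0) : AntitoneOn f (Ici a) := by
  choose! f' hf' hf'_nonpos using hf
  refine antitoneOn_of_hasDerivWithinAt_nonpos (convex_Ici a)
    (fun t ht => (hf' t ht).continuousAt.continuousWithinAt)
    (fun t ht => (hf' t ?_).hasDerivWithinAt) (fun t ht => hf'_nonpos t ?_) <;>
  · rw [interior_Ici] at ht
    exact ht.le

lemma le_sub_mul_of_hasDerivAt_le_neg {f : ℝ → ℝ} {a m : ℝ}
    (hf : ∀ t, a ≤ t → ∃ d, HasDerivAt f d t ∧ d ≤ -m) {t : ℝ} (ht : a ≤ t) :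
    f t ≤ f a - m * (t - a) := by
  have hg : AntitoneOn (fun s => f s + s * m) (Ici a) :=
    antitoneOn_Ici_of_hasDerivAt_nonpos fun s hs => by
      obtain ⟨d, hd, hdm⟩ := hf s hs
      exact ⟨d + m, hd.add (hasDerivAt_mul_const m), by linarith⟩
  have hgt : f t + t * m ≤ f a + a * m := hg self_mem_Ici ht ht
  linarith

lemma IsCompact.exists_pos_forall_le {X : Type*} [TopologicalSpace X] {K : Set X}
    {f : X → ℝ} (hK : IsCompact K) (hf : ContinuousOn f K) (hpos : ∀ x ∈ K, 0 < f x) :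
    ∃ m, 0 < m ∧ ∀ x ∈ K, m ≤ f x := by
  rcases K.eq_empty_or_nonempty with rfl | hne
  · exact ⟨1, one_pos, fun x hx => hx.elim⟩
  · obtain ⟨x₀, hx₀, hmin⟩ := hK.exists_isMinOn hne hf
    exact ⟨f x₀, hpos x₀ hx₀, hmin⟩

section Lyapunov

variable {E : Type*} [NormedAddCommGroup E] {V W : E → ℝ}

lemma isCompact_sublevel_of_tendsto_comap_norm [ProperSpace E] (hV : Continuous V)
    (hV_radial : Tendsto V (comap norm atTop) atTop) (c : ℝ) :
    IsCompact {ξ | V ξ ≤ c} := by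
  refine Metric.isCompact_of_isClosed_isBounded (isClosed_le hV continuous_const) ?_
  rw [Bornology.isBounded_def, ← comap_norm_atTop]
  exact (hV_radial.eventually_gt_atTop c).mono fun ξ h => not_le.2 h

lemma nonpos_of_hasDerivAt_comp_le_neg {x : ℝ → E} {t d : ℝ} (hV_min : ∀ ξ, V 0 ≤ V ξ)
    (hW_pos : ∀ ξ, ξ ≠ 0 → 0 < W ξ) (hd : HasDerivAt (fun s => V (x s)) d t)
    (hdW : d ≤ -W (x t)) : d ≤ 0 := by
  by_cases hxt : x t = 0
  -- the bound `-W 0` is useless here, but `t` minimizes `V ∘ x`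
  · have hmin : IsLocalMin (fun s => V (x s)) t :=
      Eventually.of_forall fun s => by simpa only [hxt] using hV_min (x s)
    exact (hmin.hasDerivAt_eq_zero hd).le
  · linarith [hW_pos (x t) hxt]

lemma eventually_comp_lt_of_hasDerivAt_le_neg {x : ℝ → E} {S : Set E} (hS : IsCompact S)
    (hV : Continuous V) (hV0 : V 0 = 0) (hV_nonneg : ∀ ξ, 0 ≤ V ξ) (hW : Continuous W)
    (hW_pos : ∀ ξ, ξ ≠ 0 → 0 < W ξ) (hxS : ∀ t, 0 ≤ t → x t ∈ S)
    (hv_anti : AntitoneOn (fun t => V (x t)) (Ici 0))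
    (hdecr : ∀ t, 0 ≤ t → ∃ d, HasDerivAt (fun s => V (x s)) d t ∧ d ≤ -W (x t))
    {δ : ℝ} (hδ : 0 < δ) : ∀ᶠ t in atTop, V (x t) < δ := by
  suffices ∃ T, 0 ≤ T ∧ V (x T) < δ by
    obtain ⟨T, hT, hvT⟩ := this
    filter_upwards [eventually_ge_atTop T] with t ht
    exact (hv_anti hT (hT.trans ht) ht).trans_lt hvT
  by_contra! hv_ge
  set K := S ∩ V ⁻¹' Ici δ
  have hK : IsCompact K := hS.inter_right (isClosed_Ici.preimage hV)
  obtain ⟨m, hm, hWm⟩ := hK.exists_pos_forall_le hW.continuousOn fun ξ hξ =>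
    hW_pos ξ fun hξ0 => by
      have : δ ≤ V ξ := hξ.2
      linarith [hξ0 ▸ hV0]
  have hdecr_m : ∀ t, 0 ≤ t → ∃ d, HasDerivAt (fun s => V (x s)) d t ∧ d ≤ -m :=
    fun t ht => (hdecr t ht).imp fun d ⟨hd, hdW⟩ =>
      ⟨hd, hdW.trans (neg_le_neg (hWm _ ⟨hxS t ht, hv_ge t ht⟩))⟩
  set T := V (x 0) / m + 1
  have hT : 0 ≤ T := add_nonneg (div_nonneg (hV_nonneg _) hm.le) zero_le_one
  have hvT := le_sub_mul_of_hasDerivAt_le_neg hdecr_m hT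
  have hmT : m * (T - 0) = V (x 0) + m := by simp only [T, sub_zero]; field_simp
  linarith [hv_ge T hT]

lemma tendsto_nhds_zero_of_tendsto_comp {α : Type*} {l : Filter α} {x : α → E} {S : Set E}
    (hS : IsCompact S) (hxS : ∀ᶠ t in l, x t ∈ S) (hV : Continuous V)
    (hV_pos : ∀ ξ, ξ ≠ 0 → 0 < V ξ) (hVx : Tendsto (fun t => V (x t)) l (𝓝 0)) :
    Tendsto x l (𝓝 0) := by
  refine Metric.tendsto_nhds.2 fun ε hε => ?_
  set K := S ∩ norm ⁻¹' Ici ε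
  have hK : IsCompact K := hS.inter_right (isClosed_Ici.preimage continuous_norm)
  obtain ⟨m, hm, hVm⟩ := hK.exists_pos_forall_le hV.continuousOn fun ξ hξ =>
    hV_pos ξ fun hξ0 => by
      have : ε ≤ ‖ξ‖ := hξ.2
      rw [hξ0, norm_zero] at this
      linarith
  filter_upwards [hxS, hVx.eventually (gt_mem_nhds hm)] with t htS htV
  rw [dist_zero_right]
  by_contra! hε_le
  exact (hVm _ ⟨htS, hε_le⟩).not_gt htV

end Lyapunov

theorem lyapunov_global_asymptotic_convergence_general
    (n : ℕ)
    (V : (Fin n → ℝ) → ℝ)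
    (hVcont : Continuous V)
    (hV0 : V 0 = 0)
    (hVpos : ∀ ξ : Fin n → ℝ, ξ ≠ 0 → 0 < V ξ)
    (hVradial : Tendsto V (comap (fun ξ : Fin n → ℝ => ‖ξ‖) atTop) atTop)
    (W : (Fin n → ℝ) → ℝ)
    (hWcont : Continuous W)
    (hWpos : ∀ ξ : Fin n → ℝ, ξ ≠ 0 → 0 < W ξ)
    (x : ℝ → (Fin n → ℝ))
    (hdecr : ∀ t : ℝ, 0 ≤ t → ∃ d : ℝ,
      HasDerivAt (fun s => V (x s)) d t ∧ d ≤ -W (x t)) :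
    Tendsto x atTop (nhds 0) := by
  have hV_nonneg : ∀ ξ, 0 ≤ V ξ := fun ξ => by
    rcases eq_or_ne ξ 0 with rfl | hξ
    exacts [hV0.ge, (hVpos ξ hξ).le]
  have hv_anti : AntitoneOn (fun t => V (x t)) (Ici 0) :=
    antitoneOn_Ici_of_hasDerivAt_nonpos fun t ht =>
      (hdecr t ht).imp fun d ⟨hd, hdW⟩ =>
        ⟨hd, nonpos_of_hasDerivAt_comp_le_neg (hV0 ▸ hV_nonneg) hWpos hd hdW⟩
  set S := {ξ | V ξ ≤ V (x 0)}
  have hS : IsCompact S := isCompact_sublevel_of_tendsto_comap_norm hVcont hVradial _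
  have hxS : ∀ t, 0 ≤ t → x t ∈ S := fun t ht => hv_anti self_mem_Ici ht ht
  have hVx : Tendsto (fun t => V (x t)) atTop (𝓝 0) :=
    tendsto_order.2 ⟨fun a ha => Eventually.of_forall fun t => ha.trans_le (hV_nonneg _),
      fun δ hδ => eventually_comp_lt_of_hasDerivAt_le_neg hS hVcont hV0 hV_nonneg hWcont
        hWpos hxS hv_anti hdecr hδ⟩
  exact tendsto_nhds_zero_of_tendsto_comp hS (eventually_atTop.2 ⟨0, hxS⟩) hVcont hVpos hVx

/-- Lyapunov convergence argument.  If `V` is continuous, positive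
definite (`V 0 = 0`, `V ξ > 0` for `ξ ≠ 0`) and radially unbounded, `W` is
continuous and positive away from the origin, and along the differentiable
trajectory `x` the function `V ∘ x` is differentiable at every `t ≥ 0` with
derivative at most `−W(x t)`, then `x t → 0` as `t → ∞`. -/
theorem lyapunov_global_asymptotic_convergence
    (n : ℕ)
    (V : (Fin n → ℝ) → ℝ)
    (hVcont : Continuous V)
    (hV0 : V 0 = 0)
    (hVpos : ∀ ξ : Fin n → ℝ, ξ ≠ 0 → 0 < V ξ)
    (hVradial : Tendsto V (comap (fun ξ : Fin n → ℝ => ‖ξ‖) atTop) atTop)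
    (W : (Fin n → ℝ) → ℝ)
    (hWcont : Continuous W)
    (hWpos : ∀ ξ : Fin n → ℝ, ξ ≠ 0 → 0 < W ξ)
    (x : ℝ → (Fin n → ℝ))
    (hx : ∀ t : ℝ, 0 ≤ t → DifferentiableAt ℝ x t)
    (hdecr : ∀ t : ℝ, 0 ≤ t → ∃ d : ℝ,
      HasDerivAt (fun s => V (x s)) d t ∧ d ≤ -W (x t)) :
    Tendsto x atTop (nhds 0) :=
  lyapunov_global_asymptotic_convergence_general n V hVcont hV0 hVpos hVradial W hWcont hWpos x
    hdecr
end
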